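/- Let k ≥ 3 and let f : K^3 → K with ess(f) = 3 and gap(f) = 2. Then ess(f_{i←j}) = 1 for all i, j ∈ {1,2,3} with i ≠ j. -/

import Mathlib

open scoped Classical

/-- The identification minor `f_{i←j}`: the `i`-th argument is replaced by the `j`-th. -/
def minor {n k : ℕ} (f : (Fin n → Fin k) → Fin k) (i j : Fin n) :
    (Fin n → Fin k) → Fin k :=
  fun a => f (Function.update a i (a j))

/-- The variable `x_i` is essential in `f`. -/
def Essential {n k : ℕ} (f : (Fin n → Fin k) → Fin k) (i : Fin n) : Prop :=
  ∃ a : Fin n → Fin k, ∃ b : Fin k, f (Function.update a i b) ≠ f a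

/-- The number of essential variables of `f`. -/
noncomputable def essCount {n k : ℕ} (f : (Fin n → Fin k) → Fin k) : ℕ :=
  (Finset.univ.filter (fun i => Essential f i)).card

/-- The essential arity gap of `f`. -/
noncomputable def gap {n k : ℕ} (f : (Fin n → Fin k) → Fin k) : ℕ :=
  essCount f -
    Finset.sup
      (Finset.univ.filter
        (fun p : Fin n × Fin n =>
          p.1 ≠ p.2 ∧ Essential f p.1 ∧ Essential f p.2))
      (fun p => essCount (minor f p.1 p.2))

/-! If all three variables are essential and every minor has at most one essential variable,
then each minor `f_{p←q}` is of the form `a ↦ f (a m, a m, a m)` for one fixed index `m`,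
so it is determined by the restriction of `f` to the diagonal. A constant minor makes `f`
constant on the diagonal, hence makes every minor constant, and the gap would be `3`, not `2`. -/

section

variable {n k : ℕ}

theorem not_essential_iff {g : (Fin n → Fin k) → Fin k} {i : Fin n} :
    ¬ Essential g i ↔ ∀ a b, g (Function.update a i b) = g a := by
  simp only [Essential, not_exists, ne_eq, not_not]

theorem essential_of_essCount_eq {g : (Fin n → Fin k) → Fin k} (h : essCount g = n)
    (i : Fin n) : Essential g i := by
  have h' : (Finset.univ.filter (Essential g ·)).card = (Finset.univ : Finset (Fin n)).card := by
    rw [Finset.card_univ, Fintype.card_fin]; exact h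
  exact Finset.card_filter_eq_iff.mp h' i (Finset.mem_univ i)

theorem apply_eq_of_eqOn_essential (g : (Fin n → Fin k) → Fin k) {a b : Fin n → Fin k}
    (h : ∀ i, Essential g i → a i = b i) : g a = g b := by
  suffices key : ∀ s : Finset (Fin n), ∀ a : Fin n → Fin k,
      (∀ i, Essential g i → a i = b i) → (∀ i ∉ s, a i = b i) → g a = g b from
    key Finset.univ a h (by simp)
  intro s
  induction s using Finset.induction_on with
  | empty => exact fun a _ hout => congrArg g (funext fun i => hout i (Finset.notMem_empty i))
  | insert i s _ ih =>
    intro a hagree hout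
    -- moving coordinate `i` to `b i` is free: either it already agrees or it is inessential
    have hstep : g (Function.update a i (b i)) = g a := by
      by_cases hi : Essential g i
      · rw [← hagree i hi, Function.update_eq_self]
      · exact not_essential_iff.mp hi a (b i)
    rw [← hstep]
    refine ih _ (fun j hj => ?_) (fun j hj => ?_) <;> rw [Function.update_apply] <;>
      split_ifs with hji
    · exact hji ▸ rfl
    · exact hagree j hj
    · exact hji ▸ rfl
    · exact hout j (by simp [hji, hj])

theorem essCount_eq_zero_iff {g : (Fin n → Fin k) → Fin k} :
    essCount g = 0 ↔ ∀ a b, g a = g b := by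
  constructor
  · intro h a b
    refine apply_eq_of_eqOn_essential g fun i hi => absurd ?_ (Finset.notMem_empty i)
    rw [← Finset.card_eq_zero.mp h]
    exact Finset.mem_filter.mpr ⟨Finset.mem_univ i, hi⟩
  · intro h
    rw [essCount, Finset.card_eq_zero, Finset.filter_eq_empty_iff]
    rintro i - ⟨a, b, hab⟩
    exact hab (h _ _)

theorem exists_apply_eq_apply_diag [NeZero n] {g : (Fin n → Fin k) → Fin k}
    (h : essCount g ≤ 1) : ∃ m, ∀ a, g a = g (fun _ => a m) := by
  obtain ⟨m, hm⟩ := Finset.card_le_one_iff_subset_singleton.mp h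
  refine ⟨m, fun a => apply_eq_of_eqOn_essential g fun i hi => ?_⟩
  have : i = m := Finset.mem_singleton.mp (hm (Finset.mem_filter.mpr ⟨Finset.mem_univ i, hi⟩))
  rw [this]

theorem minor_diag (f : (Fin n → Fin k) → Fin k) (i j : Fin n) (v : Fin k) :
    minor f i j (fun _ => v) = f (fun _ => v) := by
  simp only [minor, Function.update_eq_self]

theorem minor_apply_eq_of_diag_const [NeZero n] {f : (Fin n → Fin k) → Fin k}
    (hdiag : ∀ v w, f (fun _ => v) = f (fun _ => w)) {i j : Fin n}
    (h : essCount (minor f i j) ≤ 1) (a b : Fin n → Fin k) :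
    minor f i j a = minor f i j b := by
  obtain ⟨m, hm⟩ := exists_apply_eq_apply_diag h
  rw [hm a, hm b, minor_diag, minor_diag, hdiag]

end

theorem ess_minor_eq_one_general {k : ℕ}
    (f : (Fin 3 → Fin k) → Fin k)
    (hess : essCount f = 3) (hgap : gap f = 2) :
    ∀ i j : Fin 3, i ≠ j → essCount (minor f i j) = 1 := by
  intro i j hij
  unfold gap at hgap
  set pairs := Finset.univ.filter
    (fun p : Fin 3 × Fin 3 => p.1 ≠ p.2 ∧ Essential f p.1 ∧ Essential f p.2)
  have hne_of_mem : ∀ p ∈ pairs, p.1 ≠ p.2 := fun p hp => (Finset.mem_filter.mp hp).2.1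
  have hle : ∀ p q : Fin 3, p ≠ q → essCount (minor f p q) ≤ 1 := fun p q hpq => by
    have hpq_mem : (p, q) ∈ pairs := Finset.mem_filter.mpr
      ⟨Finset.mem_univ _, hpq, essential_of_essCount_eq hess p, essential_of_essCount_eq hess q⟩
    have : essCount (minor f p q) ≤ pairs.sup (fun p => essCount (minor f p.1 p.2)) :=
      Finset.le_sup (f := fun p => essCount (minor f p.1 p.2)) hpq_mem
    omega
  refine le_antisymm (hle i j hij) (Nat.one_le_iff_ne_zero.mpr fun h0 => ?_)
  have hdiag : ∀ v w, f (fun _ => v) = f (fun _ => w) := fun v w => by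
    rw [← minor_diag f i j v, ← minor_diag f i j w]
    exact essCount_eq_zero_iff.mp h0 _ _
  have hsup : pairs.sup (fun p => essCount (minor f p.1 p.2)) = 0 :=
    (Finset.sup_eq_bot_iff _ _).mpr fun p hp => essCount_eq_zero_iff.mpr
      (minor_apply_eq_of_diag_const hdiag (hle p.1 p.2 (hne_of_mem p hp)))
  omega

theorem ess_minor_eq_one {k : ℕ} (hk : 3 ≤ k)
    (f : (Fin 3 → Fin k) → Fin k)
    (hess : essCount f = 3) (hgap : gap f = 2) :
    ∀ i j : Fin 3, i ≠ j → essCount (minor f i j) = 1 :=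
  ess_minor_eq_one_general f hess hgap
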